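/- Let q be an odd prime power, e ≥ 2, and let R be a partition of the vertex set of Sp(2e,q) into q^e + 1 cliques each of size (q^e−1)/(q−1) (a symplectic spread). Then the graph obtained from Sp(2e,q) by deleting all edges inside the cliques of R is a divisible design graph with parameters v = (q^{2e}−1)/(q−1) and degree k' = q^e·(q^{e−1}−1)/(q−1), in which any two distinct vertices in the same clique of R have λ₁ = q^e(q^{e−2}−1)/(q−1) common neighbours and any two vertices in different cliques have λ₂ = (q^{e−1}−1)²/(q−1) common neighbours. -/

import Mathlib

namespace Stmt11

/-- Points of PG(n−1,q): 1-dimensional subspaces of Fⁿ. -/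
def Pt (F : Type*) [Field F] (n : ℕ) : Type _ :=
  {p : Submodule F (Fin n → F) // Module.finrank F p = 1}

/-- The symplectic graph: points of PG(n−1,q), adjacent iff orthogonal w.r.t. B. -/
def sp {F : Type*} [Field F] {n : ℕ} (B : LinearMap.BilinForm F (Fin n → F)) :
    SimpleGraph (Pt F n) where
  Adj x y := x ≠ y ∧ (∀ u ∈ x.1, ∀ v ∈ y.1, B u v = 0) ∧
    (∀ u ∈ y.1, ∀ v ∈ x.1, B u v = 0)
  symm := ⟨fun _ _ h => ⟨h.1.symm, h.2.2, h.2.1⟩⟩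
  loopless := ⟨fun _ h => h.1 rfl⟩

/-- The graph obtained from G by deleting all edges inside the classes of the
partition given by c. -/
def delParts {V : Type*} {m : ℕ} (G : SimpleGraph V) (c : V → Fin m) :
    SimpleGraph V where
  Adj x y := G.Adj x y ∧ c x ≠ c y
  symm := ⟨fun _ _ h => ⟨h.1.symm, h.2.symm⟩⟩
  loopless := ⟨fun x h => G.ne_of_adj h.1 rfl⟩

end Stmt11

namespace Stmt11Aux

open Module Submodule

variable {F : Type*} [Field F]

lemma exists_span_eq {V : Type*} [AddCommGroup V] [Module F V] (p : Submodule F V)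
    (hp : Module.finrank F p = 1) : ∃ v : V, v ≠ 0 ∧ p = Submodule.span F {v} := by
  obtain ⟨v, hv0, hv⟩ := (finrank_eq_one_iff' (K := F) (V := p)).mp hp
  refine ⟨v.1, by simpa using hv0, le_antisymm ?_ ?_⟩
  · intro x hx
    obtain ⟨cc, hc⟩ := hv ⟨x, hx⟩
    exact Submodule.mem_span_singleton.mpr ⟨cc, by simpa using congrArg Subtype.val hc⟩
  · exact Submodule.span_le.mpr (Set.singleton_subset_iff.mpr v.2)

lemma orth_sup {V : Type*} [AddCommGroup V] [Module F V] (B : LinearMap.BilinForm F V)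
    (N L : Submodule F V) :
    B.orthogonal (N ⊔ L) = B.orthogonal N ⊓ B.orthogonal L := by
  ext m
  simp only [Submodule.mem_inf, LinearMap.BilinForm.mem_orthogonal_iff]
  constructor
  · intro h
    exact ⟨fun n hn => h n (Submodule.mem_sup_left hn),
      fun n hn => h n (Submodule.mem_sup_right hn)⟩
  · rintro ⟨h1, h2⟩ n hn
    obtain ⟨a, ha, b, hb, rfl⟩ := Submodule.mem_sup.mp hn
    show B (a + b) m = 0
    rw [map_add, LinearMap.add_apply, show B a m = 0 from h1 a ha,
      show B b m = 0 from h2 b hb, add_zero]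

variable [Fintype F]

lemma ncard_pts {n : ℕ} (W : Submodule F (Fin n → F)) :
    {x : Stmt11.Pt F n | x.1 ≤ W}.ncard * (Fintype.card F - 1)
      = Fintype.card F ^ Module.finrank F W - 1 := by
  classical
  haveI : Finite (Submodule F (Fin n → F)) :=
    Finite.of_injective (fun p => (p : Set (Fin n → F))) SetLike.coe_injective
  haveI : Finite (Stmt11.Pt F n) := by unfold Stmt11.Pt; exact Subtype.finite
  have h0 : {x : Stmt11.Pt F n | x.1 ≤ W}.ncard = Nat.card {x : Stmt11.Pt F n // x.1 ≤ W} :=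
    (Nat.card_coe_set_eq _).symm
  have E : {v : Fin n → F // v ∈ W ∧ v ≠ 0} ≃
      Σ p : {x : Stmt11.Pt F n // x.1 ≤ W}, {v : Fin n → F // v ∈ p.1.1 ∧ v ≠ 0} :=
    { toFun := fun v => ⟨⟨⟨Submodule.span F {v.1}, finrank_span_singleton v.2.2⟩,
        Submodule.span_le.mpr (Set.singleton_subset_iff.mpr v.2.1)⟩,
        ⟨v.1, Submodule.mem_span_singleton_self _, v.2.2⟩⟩
      invFun := fun p => ⟨p.2.1, p.1.2 p.2.2.1, p.2.2.2⟩
      left_inv := fun v => rfl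
      right_inv := fun p => by
        obtain ⟨⟨⟨p, hp1⟩, hpW⟩, v, hv, hv0⟩ := p
        have hsp : Submodule.span F {v} = p :=
          Submodule.eq_of_le_of_finrank_le
            (Submodule.span_le.mpr (Set.singleton_subset_iff.mpr hv))
            (by rw [hp1, finrank_span_singleton hv0])
        refine Sigma.ext (Subtype.ext (Subtype.ext hsp)) ?_
        exact (Subtype.heq_iff_coe_eq (fun w => by
          show w ∈ Submodule.span F {v} ∧ w ≠ 0 ↔ w ∈ p ∧ w ≠ 0
          rw [hsp])).2 rfl }
  have hfib : ∀ (p : Submodule F (Fin n → F)), Module.finrank F p = 1 →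
      Nat.card {v : Fin n → F // v ∈ p ∧ v ≠ 0} = Fintype.card F - 1 := by
    intro p hp1
    have E2 : {v : Fin n → F // v ∈ p ∧ v ≠ 0} ≃ {w : p // w ≠ 0} :=
      { toFun := fun v => ⟨⟨v.1, v.2.1⟩, fun h => v.2.2 (congrArg Subtype.val h)⟩
        invFun := fun w => ⟨w.1.1, w.1.2, fun h => w.2 (Subtype.ext h)⟩
        left_inv := fun v => rfl
        right_inv := fun w => rfl }
    rw [Nat.card_congr E2]
    letI : Fintype p := Fintype.ofFinite p
    rw [Nat.card_eq_fintype_card]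
    have hc : Fintype.card {w : p // ¬ (w = 0)} = Fintype.card p - Fintype.card {w : p // w = 0} :=
      Fintype.card_subtype_compl _
    have hone : Fintype.card {w : p // w = 0} = 1 := Fintype.card_subtype_eq (0 : p)
    have hcp : Fintype.card p = Fintype.card F ^ Module.finrank F p := card_eq_pow_finrank
    simp only [ne_eq]
    rw [hc, hone, hcp, hp1, pow_one]
  have hW : Nat.card {v : Fin n → F // v ∈ W ∧ v ≠ 0}
      = Fintype.card F ^ Module.finrank F W - 1 := by
    have E2 : {v : Fin n → F // v ∈ W ∧ v ≠ 0} ≃ {w : W // w ≠ 0} :=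
      { toFun := fun v => ⟨⟨v.1, v.2.1⟩, fun h => v.2.2 (congrArg Subtype.val h)⟩
        invFun := fun w => ⟨w.1.1, w.1.2, fun h => w.2 (Subtype.ext h)⟩
        left_inv := fun v => rfl
        right_inv := fun w => rfl }
    rw [Nat.card_congr E2]
    letI : Fintype W := Fintype.ofFinite W
    rw [Nat.card_eq_fintype_card]
    have hc : Fintype.card {w : W // ¬ (w = 0)}
        = Fintype.card W - Fintype.card {w : W // w = 0} := Fintype.card_subtype_compl _
    have hone : Fintype.card {w : W // w = 0} = 1 := Fintype.card_subtype_eq (0 : W)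
    have hcp : Fintype.card W = Fintype.card F ^ Module.finrank F W := card_eq_pow_finrank
    simp only [ne_eq]
    rw [hc, hone, hcp]
  have hsig : Nat.card {v : Fin n → F // v ∈ W ∧ v ≠ 0}
      = Nat.card {x : Stmt11.Pt F n // x.1 ≤ W} * (Fintype.card F - 1) := by
    rw [Nat.card_congr E]
    letI : Fintype {x : Stmt11.Pt F n // x.1 ≤ W} := Fintype.ofFinite _
    letI : ∀ p : {x : Stmt11.Pt F n // x.1 ≤ W},
        Fintype {v : Fin n → F // v ∈ p.1.1 ∧ v ≠ 0} := fun p => Fintype.ofFinite _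
    rw [Nat.card_eq_fintype_card, Fintype.card_sigma, Nat.card_eq_fintype_card]
    have : ∀ p : {x : Stmt11.Pt F n // x.1 ≤ W},
        Fintype.card {v : Fin n → F // v ∈ p.1.1 ∧ v ≠ 0} = Fintype.card F - 1 := by
      intro p
      rw [← Nat.card_eq_fintype_card]
      exact hfib p.1.1 p.1.2
    simp only [this]
    rw [Finset.sum_const, Finset.card_univ, smul_eq_mul]
  rw [h0, ← hsig, hW]

end Stmt11Aux

set_option maxHeartbeats 2000000 in
open Stmt11 in
/-- deleting the edges of the cliques of a symplectic spread of
Sp(2e,q) yields a divisible design graph with the stated parameters. -/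
theorem stmt11 {F : Type*} [Field F] [Fintype F] (q e : ℕ)
    (hq : Fintype.card F = q) (he : 2 ≤ e) (hodd : Odd q)
    (B : LinearMap.BilinForm F (Fin (2 * e) → F))
    (halt : ∀ v, B v v = 0)
    (hnd : ∀ v, (∀ w, B v w = 0) → v = 0)
    (c : Pt F (2 * e) → Fin (q ^ e + 1))
    (hsize : ∀ i, {x | c x = i}.ncard = (q ^ e - 1) / (q - 1))
    (hclique : ∀ x y, x ≠ y → c x = c y → (sp B).Adj x y) :
    (∀ x, {y | (delParts (sp B) c).Adj x y}.ncard
        = q ^ e * (q ^ (e - 1) - 1) / (q - 1)) ∧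
    (∀ x y, x ≠ y → c x = c y →
      {z | (delParts (sp B) c).Adj x z ∧ (delParts (sp B) c).Adj y z}.ncard
        = q ^ e * (q ^ (e - 2) - 1) / (q - 1)) ∧
    (∀ x y, c x ≠ c y →
      {z | (delParts (sp B) c).Adj x z ∧ (delParts (sp B) c).Adj y z}.ncard
        = (q ^ (e - 1) - 1) ^ 2 / (q - 1)) := by
  classical
  have hq2 : 2 ≤ q := by
    have h := Fintype.one_lt_card (α := F)
    rw [hq] at h
    omega
  have hqpos : 0 < q - 1 := by omega
  haveI : Finite (Submodule F (Fin (2*e) → F)) :=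
    Finite.of_injective (fun p => (p : Set (Fin (2*e) → F))) SetLike.coe_injective
  haveI hfinPt : Finite (Pt F (2*e)) := by unfold Stmt11.Pt; exact Subtype.finite
  have hAlt : LinearMap.IsAlt B := halt
  have hRefl : LinearMap.IsRefl B := hAlt.isRefl
  have hNd : B.Nondegenerate := hRefl.nondegenerate_iff_separatingLeft.mpr hnd
  have hrk : Module.finrank F (Fin (2*e) → F) = 2*e := Module.finrank_fin_fun (R := F)
  have hiso : ∀ x : Pt F (2*e), x.1 ≤ B.orthogonal x.1 := by
    intro x
    obtain ⟨v, hv0, hv⟩ := Stmt11Aux.exists_span_eq x.1 x.2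
    rw [hv]
    intro m hm
    rw [LinearMap.BilinForm.mem_orthogonal_iff]
    intro u hu
    obtain ⟨a, rfl⟩ := Submodule.mem_span_singleton.mp hu
    obtain ⟨b, rfl⟩ := Submodule.mem_span_singleton.mp hm
    show B (a • v) (b • v) = 0
    simp [map_smul, smul_eq_mul, halt v]
  have hadj : ∀ x y : Pt F (2*e), (sp B).Adj x y ↔ x ≠ y ∧ y.1 ≤ B.orthogonal x.1 := by
    intro x y
    constructor
    · rintro ⟨hne, h1, h2⟩
      refine ⟨hne, fun v hv => ?_⟩
      rw [LinearMap.BilinForm.mem_orthogonal_iff]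
      exact fun u hu => h1 u hu v hv
    · rintro ⟨hne, hle⟩
      exact ⟨hne, fun u hu v hv => hle hv u hu, fun u hu v hv => hRefl v u (hle hu v hv)⟩
  set Pts : Submodule F (Fin (2*e) → F) → Set (Pt F (2*e)) := fun W => {x | x.1 ≤ W} with hPts
  have hcard : ∀ W : Submodule F (Fin (2*e) → F),
      (Pts W).ncard * (q - 1) = q ^ (Module.finrank F W) - 1 := by
    intro W
    have h := Stmt11Aux.ncard_pts (F := F) W
    rw [hq] at h
    exact h
  have hPtsMono : ∀ {W W' : Submodule F (Fin (2*e) → F)}, W ≤ W' → Pts W ⊆ Pts W' :=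
    fun h x hx => le_trans hx h
  set U : Fin (q ^ e + 1) → Submodule F (Fin (2*e) → F) :=
    fun i => ⨆ x : {x : Pt F (2*e) // c x = i}, x.1.1 with hU
  have hxU : ∀ x : Pt F (2*e), x.1 ≤ U (c x) :=
    fun x => le_iSup (fun z : {z : Pt F (2*e) // c z = c x} => z.1.1) ⟨x, rfl⟩
  have hUker : ∀ i (y : Pt F (2*e)), c y = i → ∀ v ∈ y.1,
      U i ≤ LinearMap.ker (B.flip v) := by
    intro i y hy v hv
    refine iSup_le fun z => ?_
    intro u hu
    rw [LinearMap.mem_ker]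
    show B u v = 0
    by_cases hzy : z.1 = y
    · exact hiso y hv u (hzy ▸ hu)
    · exact (hclique z.1 y hzy (z.2.trans hy.symm)).2.1 u hu v hv
  have hUiso : ∀ i, U i ≤ B.orthogonal (U i) := by
    intro i
    refine iSup_le fun y => ?_
    intro v hv
    rw [LinearMap.BilinForm.mem_orthogonal_iff]
    intro u hu
    exact hUker i y.1 y.2 v hv hu
  have hOrthrk : ∀ W : Submodule F (Fin (2*e) → F),
      Module.finrank F (B.orthogonal W) = 2*e - Module.finrank F W := by
    intro W
    rw [LinearMap.BilinForm.finrank_orthogonal hNd, hrk]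
  have hUle : ∀ i, Module.finrank F (U i) ≤ e := by
    intro i
    have h1 := Submodule.finrank_mono (hUiso i)
    rw [hOrthrk] at h1
    have h2 : Module.finrank F (U i) ≤ 2*e := le_trans (Submodule.finrank_le _) hrk.le
    omega
  have hdvd : ∀ k : ℕ, (q - 1) ∣ q ^ k - 1 := fun k => by
    simpa using Nat.sub_dvd_pow_sub_pow q 1 k
  have hClassCard : ∀ i, {x : Pt F (2*e) | c x = i}.ncard * (q - 1) = q ^ e - 1 := by
    intro i
    rw [hsize i, Nat.div_mul_cancel (hdvd e)]
  have hsubCl : ∀ i, {x : Pt F (2*e) | c x = i} ⊆ Pts (U i) := by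
    intro i x hx
    have h := hxU x
    rw [hx] at h
    exact h
  have hUrk : ∀ i, Module.finrank F (U i) = e := by
    intro i
    have hle1 : {x : Pt F (2*e) | c x = i}.ncard ≤ (Pts (U i)).ncard :=
      Set.ncard_le_ncard (hsubCl i) (Set.toFinite _)
    have h1 := hClassCard i
    have h2 := hcard (U i)
    have h3 : q ^ e - 1 ≤ q ^ (Module.finrank F (U i)) - 1 := by
      rw [← h1, ← h2]
      exact Nat.mul_le_mul_right _ hle1
    have h4 : q ^ e ≤ q ^ (Module.finrank F (U i)) := by
      have h5 := Nat.one_le_pow e q (by omega)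
      have h6 := Nat.one_le_pow (Module.finrank F (U i)) q (by omega)
      omega
    have h5 : e ≤ Module.finrank F (U i) := (Nat.pow_le_pow_iff_right (by omega)).mp h4
    have h6 := hUle i
    omega
  have hPtsCl : ∀ i, Pts (U i) = {x : Pt F (2*e) | c x = i} := by
    intro i
    refine (Set.eq_of_subset_of_ncard_le (hsubCl i) ?_ (Set.toFinite _)).symm
    have h1 := hClassCard i
    have h2 := hcard (U i)
    rw [hUrk i] at h2
    have h3 : (Pts (U i)).ncard * (q-1) = {x : Pt F (2*e) | c x = i}.ncard * (q-1) := by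
      rw [h1, h2]
    exact Nat.le_of_eq (Nat.eq_of_mul_eq_mul_right hqpos h3)
  have hmem : ∀ (z : Pt F (2*e)) i, z.1 ≤ U i ↔ c z = i := by
    intro z i
    constructor
    · intro h
      have h2 : z ∈ Pts (U i) := h
      rw [hPtsCl i] at h2
      exact h2
    · intro h
      have h2 := hxU z
      rw [h] at h2
      exact h2
  have hUorthU : ∀ i, B.orthogonal (U i) = U i := by
    intro i
    refine (Submodule.eq_of_le_of_finrank_le (hUiso i) ?_).symm
    rw [hOrthrk, hUrk]
    omega
  have hUleOrth : ∀ (x : Pt F (2*e)), U (c x) ≤ B.orthogonal x.1 := by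
    intro x
    have h1 : x.1 ≤ U (c x) := hxU x
    have h2 := LinearMap.BilinForm.orthogonal_le (B := B) h1
    rw [hUorthU] at h2
    exact h2
  have hsup2 : ∀ x y : Pt F (2*e), x ≠ y →
      Module.finrank F ((x.1 ⊔ y.1 : Submodule F (Fin (2*e) → F))) = 2 := by
    intro x y hxy
    have hne : x.1 ≠ y.1 := fun h => hxy (Subtype.ext h)
    have hinf : Module.finrank F ((x.1 ⊓ y.1 : Submodule F (Fin (2*e) → F))) = 0 := by
      by_contra h
      have h1 : 1 ≤ Module.finrank F ((x.1 ⊓ y.1 : Submodule F (Fin (2*e) → F))) := by omega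
      have hx2 : x.1 ⊓ y.1 = x.1 :=
        Submodule.eq_of_le_of_finrank_le inf_le_left (by rw [x.2]; exact h1)
      have hy2 : x.1 ⊓ y.1 = y.1 :=
        Submodule.eq_of_le_of_finrank_le inf_le_right (by rw [y.2]; exact h1)
      exact hne (hx2.symm.trans hy2)
    have h3 := Submodule.finrank_sup_add_finrank_inf_eq x.1 y.1
    rw [hinf, x.2, y.2] at h3
    omega
  have hWrk : ∀ x y : Pt F (2*e), x ≠ y →
      Module.finrank F ((B.orthogonal x.1 ⊓ B.orthogonal y.1 : Submodule F (Fin (2*e) → F)))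
        = 2*e - 2 := by
    intro x y hxy
    rw [← Stmt11Aux.orth_sup, hOrthrk, hsup2 x y hxy]
  have hinfrk : ∀ i (y : Pt F (2*e)), c y ≠ i →
      Module.finrank F ((U i ⊓ B.orthogonal y.1 : Submodule F (Fin (2*e) → F))) = e - 1 := by
    intro i y hcy
    have hHrk : Module.finrank F (B.orthogonal y.1) = 2*e - 1 := by rw [hOrthrk, y.2]
    have hnotle : ¬ U i ≤ B.orthogonal y.1 := by
      intro hle
      have h1 : y.1 ≤ B.orthogonal (U i) :=
        le_trans (LinearMap.BilinForm.le_orthogonal_orthogonal hRefl)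
          (LinearMap.BilinForm.orthogonal_le hle)
      rw [hUorthU i] at h1
      exact hcy ((hmem y i).1 h1)
    have hsup : Module.finrank F ((U i ⊔ B.orthogonal y.1 : Submodule F (Fin (2*e) → F)))
        = 2*e := by
      have hle2 : Module.finrank F ((U i ⊔ B.orthogonal y.1 : Submodule F (Fin (2*e) → F)))
          ≤ 2*e := le_trans (Submodule.finrank_le _) hrk.le
      by_contra hne2
      have hle3 : Module.finrank F ((U i ⊔ B.orthogonal y.1 : Submodule F (Fin (2*e) → F)))
          ≤ Module.finrank F (B.orthogonal y.1) := by omega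
      have hEq := Submodule.eq_of_le_of_finrank_le le_sup_right hle3
      exact hnotle (le_trans le_sup_left hEq.ge)
    have hadd := Submodule.finrank_sup_add_finrank_inf_eq (U i) (B.orthogonal y.1)
    rw [hUrk i, hHrk, hsup] at hadd
    omega
  have hdiv : ∀ a b Z : ℕ, a * (q-1) - b * (q-1) = Z → a - b = Z / (q - 1) := by
    intro a b Z hZ
    exact (Nat.div_eq_of_eq_mul_left hqpos ((Nat.sub_mul a b (q-1)).trans hZ).symm).symm
  have hq1e : 1 ≤ q ^ (e-1) := Nat.one_le_pow _ _ (by omega)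
  have hq1e2 : 1 ≤ q ^ (e-2) := Nat.one_le_pow _ _ (by omega)
  have hq1ee : 1 ≤ q ^ e := Nat.one_le_pow _ _ (by omega)
  refine ⟨?_, ?_, ?_⟩
  · -- degree
    intro x
    have hseteq : {y | (delParts (sp B) c).Adj x y}
        = Pts (B.orthogonal x.1) \ Pts (U (c x)) := by
      ext z
      simp only [Set.mem_setOf_eq, Set.mem_diff]
      constructor
      · rintro ⟨hadjz, hcz⟩
        exact ⟨((hadj x z).mp hadjz).2, fun hle => hcz ((hmem z (c x)).1 hle).symm⟩
      · rintro ⟨h1, h2⟩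
        have hcz : c z ≠ c x := fun h => h2 ((hmem z (c x)).2 h)
        have hzx : x ≠ z := by
          rintro rfl
          exact h2 (hxU x)
        exact ⟨(hadj x z).2 ⟨hzx, h1⟩, fun h => hcz h.symm⟩
    rw [hseteq, Set.ncard_diff (hPtsMono (hUleOrth x)) (Set.toFinite _)]
    apply hdiv
    rw [hcard, hcard, hOrthrk, x.2, hUrk]
    have hp1 : q ^ e * q ^ (e-1) = q ^ (2*e-1) := by
      rw [← pow_add]
      congr 1
      omega
    have h4 : q ^ e ≤ q ^ (2*e-1) := Nat.pow_le_pow_right (by omega) (by omega)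
    have h7 : 1 ≤ q ^ (2*e-1) := Nat.one_le_pow _ _ (by omega)
    have h6 : q ^ e - 1 ≤ q ^ (2*e-1) - 1 := by omega
    have hp1' : ((q:ℤ))^e * q^(e-1) = q^(2*e-1) := by exact_mod_cast hp1
    zify [hq1e, hq1ee, h6, h7]
    linear_combination -hp1'
  · -- lambda1
    intro x y hxy hcc
    have hWle : U (c x) ≤ B.orthogonal x.1 ⊓ B.orthogonal y.1 :=
      le_inf (hUleOrth x) (by rw [hcc]; exact hUleOrth y)
    have hseteq : {z | (delParts (sp B) c).Adj x z ∧ (delParts (sp B) c).Adj y z}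
        = Pts (B.orthogonal x.1 ⊓ B.orthogonal y.1) \ Pts (U (c x)) := by
      ext z
      simp only [Set.mem_setOf_eq, Set.mem_diff]
      constructor
      · rintro ⟨⟨hax, hcx⟩, ⟨hay, hcy⟩⟩
        exact ⟨le_inf ((hadj x z).mp hax).2 ((hadj y z).mp hay).2,
          fun hle => hcx ((hmem z (c x)).1 hle).symm⟩
      · rintro ⟨h1, h2⟩
        have hcz : c z ≠ c x := fun h => h2 ((hmem z (c x)).2 h)
        have hzx : x ≠ z := by
          rintro rfl
          exact h2 (hxU x)
        have hzy : y ≠ z := by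
          rintro rfl
          refine h2 ?_
          rw [hcc]
          exact hxU y
        exact ⟨⟨(hadj x z).2 ⟨hzx, le_trans h1 inf_le_left⟩, fun h => hcz h.symm⟩,
          ⟨(hadj y z).2 ⟨hzy, le_trans h1 inf_le_right⟩,
            fun h => hcz (h.symm.trans hcc.symm)⟩⟩
    rw [hseteq, Set.ncard_diff (hPtsMono hWle) (Set.toFinite _)]
    apply hdiv
    rw [hcard, hcard, hWrk x y hxy, hUrk]
    have hp1 : q ^ e * q ^ (e-2) = q ^ (2*e-2) := by
      rw [← pow_add]
      congr 1
      omega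
    have h4 : q ^ e ≤ q ^ (2*e-2) := Nat.pow_le_pow_right (by omega) (by omega)
    have h7 : 1 ≤ q ^ (2*e-2) := Nat.one_le_pow _ _ (by omega)
    have h6 : q ^ e - 1 ≤ q ^ (2*e-2) - 1 := by omega
    have hp1' : ((q:ℤ))^e * q^(e-2) = q^(2*e-2) := by exact_mod_cast hp1
    zify [hq1e2, hq1ee, h6, h7]
    linear_combination -hp1'
  · -- lambda2
    intro x y hcxy
    have hxy : x ≠ y := fun h => hcxy (by rw [h])
    have hA1 : U (c x) ⊓ (B.orthogonal x.1 ⊓ B.orthogonal y.1)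
        = U (c x) ⊓ B.orthogonal y.1 := by
      rw [← inf_assoc, inf_eq_left.mpr (hUleOrth x)]
    have hA2 : U (c y) ⊓ (B.orthogonal x.1 ⊓ B.orthogonal y.1)
        = U (c y) ⊓ B.orthogonal x.1 := by
      rw [inf_comm (B.orthogonal x.1), ← inf_assoc, inf_eq_left.mpr (hUleOrth y)]
    have hseteq : {z | (delParts (sp B) c).Adj x z ∧ (delParts (sp B) c).Adj y z}
        = Pts (B.orthogonal x.1 ⊓ B.orthogonal y.1)
          \ (Pts (U (c x) ⊓ (B.orthogonal x.1 ⊓ B.orthogonal y.1))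
            ∪ Pts (U (c y) ⊓ (B.orthogonal x.1 ⊓ B.orthogonal y.1))) := by
      ext z
      simp only [Set.mem_setOf_eq, Set.mem_diff, Set.mem_union]
      constructor
      · rintro ⟨⟨hax, hcx⟩, ⟨hay, hcy⟩⟩
        refine ⟨le_inf ((hadj x z).mp hax).2 ((hadj y z).mp hay).2, ?_⟩
        rintro (hle | hle)
        · exact hcx ((hmem z (c x)).1 (le_trans hle inf_le_left)).symm
        · exact hcy ((hmem z (c y)).1 (le_trans hle inf_le_left)).symm
      · rintro ⟨h1, h2⟩
        have hczx : c z ≠ c x := fun h => h2 (Or.inl (le_inf ((hmem z (c x)).2 h) h1))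
        have hczy : c z ≠ c y := fun h => h2 (Or.inr (le_inf ((hmem z (c y)).2 h) h1))
        have hzx : x ≠ z := by
          rintro rfl
          exact hczx rfl
        have hzy : y ≠ z := by
          rintro rfl
          exact hczy rfl
        exact ⟨⟨(hadj x z).2 ⟨hzx, le_trans h1 inf_le_left⟩, fun h => hczx h.symm⟩,
          ⟨(hadj y z).2 ⟨hzy, le_trans h1 inf_le_right⟩, fun h => hczy h.symm⟩⟩
    have hsub1 : Pts (U (c x) ⊓ (B.orthogonal x.1 ⊓ B.orthogonal y.1))
        ⊆ Pts (B.orthogonal x.1 ⊓ B.orthogonal y.1) := hPtsMono inf_le_right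
    have hsub2 : Pts (U (c y) ⊓ (B.orthogonal x.1 ⊓ B.orthogonal y.1))
        ⊆ Pts (B.orthogonal x.1 ⊓ B.orthogonal y.1) := hPtsMono inf_le_right
    have hdisj : Disjoint (Pts (U (c x) ⊓ (B.orthogonal x.1 ⊓ B.orthogonal y.1)))
        (Pts (U (c y) ⊓ (B.orthogonal x.1 ⊓ B.orthogonal y.1))) := by
      rw [Set.disjoint_left]
      intro z hz1 hz2
      have e1 := (hmem z (c x)).1 (le_trans hz1 inf_le_left)
      have e2 := (hmem z (c y)).1 (le_trans hz2 inf_le_left)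
      exact hcxy (e1.symm.trans e2)
    rw [hseteq, Set.ncard_diff (Set.union_subset hsub1 hsub2) (Set.toFinite _),
      Set.ncard_union_eq hdisj (Set.toFinite _) (Set.toFinite _)]
    apply hdiv
    have hb1 : (Pts (U (c x) ⊓ (B.orthogonal x.1 ⊓ B.orthogonal y.1))).ncard * (q-1)
        = q^(e-1) - 1 := by
      rw [hcard, hA1, hinfrk (c x) y (fun h => hcxy h.symm)]
    have hb2 : (Pts (U (c y) ⊓ (B.orthogonal x.1 ⊓ B.orthogonal y.1))).ncard * (q-1)
        = q^(e-1) - 1 := by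
      rw [hcard, hA2, hinfrk (c y) x hcxy]
    have ha : (Pts (B.orthogonal x.1 ⊓ B.orthogonal y.1)).ncard * (q-1)
        = q^(2*e-2) - 1 := by
      rw [hcard, hWrk x y hxy]
    rw [add_mul, ha, hb1, hb2]
    have hp1 : q ^ (e-1) * q ^ (e-1) = q ^ (2*e-2) := by
      rw [← pow_add]
      congr 1
      omega
    have hp1' : ((q:ℤ))^(e-1) * q^(e-1) = q^(2*e-2) := by exact_mod_cast hp1
    have h7 : 1 ≤ q ^ (2*e-2) := Nat.one_le_pow _ _ (by omega)
    have h2t' : 2*((q:ℤ)^(e-1)) ≤ (q:ℤ)^(2*e-2) + 1 := by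
      nlinarith [hp1', sq_nonneg ((q:ℤ)^(e-1) - 1)]
    have h2t : 2 * q^(e-1) ≤ q^(2*e-2) + 1 := by exact_mod_cast h2t'
    have hle6 : (q^(e-1) - 1) + (q^(e-1) - 1) ≤ q^(2*e-2) - 1 := by omega
    zify [hq1e, h7, hle6]
    linear_combination -hp1'
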